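/- arXiv:1611.10234 — 2 statements merged into one kernel-verified Lean document; each statement's English description precedes it below -/
import Mathlib

section
/- Let f be holomorphic on the unit disk with f(0)=0, f'(0)=1, and suppose z f'(z) is starlike. Then 1/(1+|z|)² ≤ |f'(z)| ≤ 1/(1−|z|)² for all z ∈ 𝔻. -/
open Complex Metric Set

/-!
Put `p = 1 + z f''/f'`, which equals `z g'/g` for `g = z f'`; so `Re p > 0` and `p 0 = 1`.
The Schwarz lemma applied to the Cayley transform `(p - 1)/(p + 1)` gives
`(1 - |w|)/(1 + |w|) ≤ Re p(w) ≤ (1 + |w|)/(1 - |w|)`. Along the segment `t ↦ t z` we have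
`d/dt log |f'(t z)| = (Re p(t z) - 1)/t`, which lies between `-2|z|/(1 + t|z|)` and
`2|z|/(1 - t|z|)`; integrating over `[0, 1]` gives
`-2 log (1 + |z|) ≤ log |f'(z)| ≤ -2 log (1 - |z|)`.
-/

theorem Complex.norm_sub_one_lt_norm_add_one {w : ℂ} (hw : 0 < w.re) : ‖w - 1‖ < ‖w + 1‖ := by
  rw [← sq_lt_sq₀ (norm_nonneg _) (norm_nonneg _), Complex.sq_norm, Complex.sq_norm,
    normSq_apply, normSq_apply]
  simp only [sub_re, sub_im, add_re, add_im, one_re, one_im]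
  nlinarith

theorem Complex.re_mem_Icc_of_norm_sub_one_le {w : ℂ} {r : ℝ} (hr0 : 0 ≤ r) (hr1 : r < 1)
    (h : ‖w - 1‖ ≤ r * ‖w + 1‖) : w.re ∈ Icc ((1 - r) / (1 + r)) ((1 + r) / (1 - r)) := by
  have hr2 : 0 ≤ 1 - r ^ 2 := sub_nonneg.2 (pow_le_one₀ hr0 hr1.le)
  have hsq : (w.re - 1) ^ 2 ≤ (r * (w.re + 1)) ^ 2 := by
    have := pow_le_pow_left₀ (norm_nonneg _) h 2
    rw [mul_pow, Complex.sq_norm, Complex.sq_norm, normSq_apply, normSq_apply] at this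
    simp only [sub_re, sub_im, add_re, add_im, one_re, one_im] at this
    nlinarith [mul_nonneg hr2 (sq_nonneg w.im)]
  have hpos : 0 < w.re + 1 := by nlinarith [mul_nonneg hr2 (sq_nonneg (w.re + 1))]
  obtain ⟨hlo, hhi⟩ := abs_le_of_sq_le_sq' hsq (by positivity)
  constructor
  · rw [div_le_iff₀ (by linarith)]; linarith
  · rw [le_div_iff₀ (by linarith)]; linarith

theorem Complex.re_mem_Icc_of_re_pos {p : ℂ → ℂ} (hd : DifferentiableOn ℂ p (ball 0 1))
    (h0 : p 0 = 1) (hre : ∀ w ∈ ball (0 : ℂ) 1, 0 < (p w).re) {z : ℂ} (hz : z ∈ ball (0 : ℂ) 1) :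
    (p z).re ∈ Icc ((1 - ‖z‖) / (1 + ‖z‖)) ((1 + ‖z‖) / (1 - ‖z‖)) := by
  have hne : ∀ w ∈ ball (0 : ℂ) 1, p w + 1 ≠ 0 := fun w hw h => by
    linarith [hre w hw, show (p w).re + 1 = 0 by simpa using congrArg re h]
  have hschwarz := norm_le_norm_of_mapsTo_ball (f := fun w => (p w - 1) / (p w + 1))
    ((hd.sub_const 1).div (hd.add_const 1) hne)
    (fun w hw => by
      simpa [norm_div, div_le_one (norm_pos_iff.2 (hne w hw))] using
        (norm_sub_one_lt_norm_add_one (hre w hw)).le)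
    (by simp [h0]) (mem_ball_zero_iff.1 hz)
  rw [norm_div, div_le_iff₀ (norm_pos_iff.2 (hne z hz))] at hschwarz
  exact re_mem_Icc_of_norm_sub_one_le (norm_nonneg z) (mem_ball_zero_iff.1 hz) hschwarz

theorem HasDerivAt.log_norm {u : ℝ → ℂ} {u' : ℂ} {t : ℝ} (hu : HasDerivAt u u' t)
    (hne : u t ≠ 0) : HasDerivAt (fun s => Real.log ‖u s‖) (u' / u t).re t := by
  have hsq : ‖u t‖ ^ 2 ≠ 0 := by positivity
  have e : (fun s => Real.log ‖u s‖) = fun s => Real.log (‖u s‖ ^ 2) / 2 := by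
    funext s; rw [Real.log_pow]; push_cast; ring
  rw [e]
  refine ((hu.norm_sq.log hsq).div_const 2).congr_deriv ?_
  rw [div_re, Complex.inner, Complex.sq_norm, normSq_apply]
  simp only [mul_re, conj_re, conj_im, mul_neg, sub_neg_eq_add]
  field_simp

theorem sub_le_sub_of_hasDerivAt_le {φ ψ φ' ψ' : ℝ → ℝ} {a b : ℝ} (hab : a ≤ b)
    (hφ : ∀ t ∈ Icc a b, HasDerivAt φ (φ' t) t) (hψ : ∀ t ∈ Icc a b, HasDerivAt ψ (ψ' t) t)
    (hle : ∀ t ∈ Ioo a b, φ' t ≤ ψ' t) : φ b - φ a ≤ ψ b - ψ a := by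
  have hmono : MonotoneOn (fun t => ψ t - φ t) (Icc a b) :=
    monotoneOn_of_hasDerivWithinAt_nonneg (f' := fun t => ψ' t - φ' t) (convex_Icc a b)
      (fun t ht => ((hψ t ht).sub (hφ t ht)).continuousAt.continuousWithinAt)
      (fun t ht => ((hψ t (interior_subset ht)).sub (hφ t (interior_subset ht))).hasDerivWithinAt)
      (fun t ht => sub_nonneg.2 (hle t (by rwa [interior_Icc] at ht)))
  linarith [hmono ⟨le_rfl, hab⟩ ⟨hab, le_rfl⟩ hab]

theorem norm_ofReal_mul_of_nonneg {t : ℝ} (ht : 0 ≤ t) (z : ℂ) : ‖(t : ℂ) * z‖ = t * ‖z‖ := by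
  rw [norm_mul, norm_real, Real.norm_of_nonneg ht]

theorem ofReal_mul_mem_ball {t : ℝ} (ht : t ∈ Icc (0 : ℝ) 1) {z : ℂ} (hz : z ∈ ball (0 : ℂ) 1) :
    (t : ℂ) * z ∈ ball (0 : ℂ) 1 := by
  rw [mem_ball_zero_iff, norm_ofReal_mul_of_nonneg ht.1] at *
  nlinarith [ht.2, norm_nonneg z]

theorem re_one_add_ofReal_mul_mul (t : ℝ) (z c : ℂ) :
    (1 + t * z * c).re = 1 + t * (z * c).re := by
  rw [add_re, one_re, mul_assoc, re_ofReal_mul]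

theorem hasDerivAt_log_norm_comp_ofReal_mul {h : ℂ → ℂ} {z : ℂ} {t : ℝ}
    (hd : DifferentiableAt ℂ h (t * z)) (hne : h (t * z) ≠ 0) :
    HasDerivAt (fun s : ℝ => Real.log ‖h (s * z)‖) (z * logDeriv h (t * z)).re t := by
  have hu := (hd.hasDerivAt.comp (t : ℂ) (hasDerivAt_mul_const z)).comp_ofReal
  refine (hu.log_norm hne).congr_deriv ?_
  rw [logDeriv_apply, mul_div_right_comm, mul_comm]
  rfl

theorem hasDerivAt_log_norm_along_segment {h : ℂ → ℂ} (hd : DifferentiableOn ℂ h (ball 0 1))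
    (hne : ∀ w ∈ ball (0 : ℂ) 1, h w ≠ 0) {z : ℂ} (hz : z ∈ ball (0 : ℂ) 1) {t : ℝ}
    (ht : t ∈ Icc (0 : ℝ) 1) :
    HasDerivAt (fun s : ℝ => Real.log ‖h (s * z)‖) (z * logDeriv h (t * z)).re t :=
  have hmem := ofReal_mul_mem_ball ht hz
  hasDerivAt_log_norm_comp_ofReal_mul ((hd _ hmem).differentiableAt (isOpen_ball.mem_nhds hmem))
    (hne _ hmem)

theorem norm_le_div_one_sub_sq_of_re_le {h : ℂ → ℂ} (hd : DifferentiableOn ℂ h (ball 0 1))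
    (hne : ∀ w ∈ ball (0 : ℂ) 1, h w ≠ 0)
    (hre : ∀ w ∈ ball (0 : ℂ) 1, (1 + w * logDeriv h w).re ≤ (1 + ‖w‖) / (1 - ‖w‖))
    {z : ℂ} (hz : z ∈ ball (0 : ℂ) 1) : ‖h z‖ ≤ ‖h 0‖ / (1 - ‖z‖) ^ 2 := by
  have hr : ‖z‖ < 1 := mem_ball_zero_iff.1 hz
  have hbound : ∀ t ∈ Icc (0 : ℝ) 1, HasDerivAt (fun s => -2 * Real.log (1 - s * ‖z‖))
      (2 * ‖z‖ / (1 - t * ‖z‖)) t := by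
    intro t ht
    have hpos : 0 < 1 - t * ‖z‖ := by nlinarith [ht.2, norm_nonneg z]
    refine ((((hasDerivAt_id t).mul_const ‖z‖).const_sub 1).log hpos.ne').const_mul (-2)
      |>.congr_deriv ?_
    simp only [id, one_mul]
    ring
  have key := sub_le_sub_of_hasDerivAt_le zero_le_one
    (fun t ht => hasDerivAt_log_norm_along_segment hd hne hz ht) hbound fun t ht => by
      have hpos : 0 < 1 - t * ‖z‖ := by nlinarith [ht.2, norm_nonneg z]
      have := hre _ (ofReal_mul_mem_ball (Ioo_subset_Icc_self ht) hz)
      rw [re_one_add_ofReal_mul_mul, norm_ofReal_mul_of_nonneg ht.1.le] at this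
      rw [le_div_iff₀ hpos] at this ⊢
      nlinarith [ht.1]
  have hz0 : 0 < ‖h z‖ := norm_pos_iff.2 (hne z hz)
  have h00 : 0 < ‖h 0‖ := norm_pos_iff.2 (hne 0 (mem_ball_self one_pos))
  rw [← Real.log_le_log_iff hz0 (by positivity), Real.log_div h00.ne' (by positivity),
    Real.log_pow]
  simp only [ofReal_one, one_mul, ofReal_zero, zero_mul, sub_zero, Real.log_one, mul_zero] at key
  push_cast
  linarith

theorem div_one_add_sq_le_norm_of_le_re {h : ℂ → ℂ} (hd : DifferentiableOn ℂ h (ball 0 1))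
    (hne : ∀ w ∈ ball (0 : ℂ) 1, h w ≠ 0)
    (hre : ∀ w ∈ ball (0 : ℂ) 1, (1 - ‖w‖) / (1 + ‖w‖) ≤ (1 + w * logDeriv h w).re)
    {z : ℂ} (hz : z ∈ ball (0 : ℂ) 1) : ‖h 0‖ / (1 + ‖z‖) ^ 2 ≤ ‖h z‖ := by
  have hbound : ∀ t ∈ Icc (0 : ℝ) 1, HasDerivAt (fun s => -2 * Real.log (1 + s * ‖z‖))
      (-2 * ‖z‖ / (1 + t * ‖z‖)) t := by
    intro t ht
    have hpos : 0 < 1 + t * ‖z‖ := by nlinarith [ht.1, norm_nonneg z]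
    refine ((((hasDerivAt_id t).mul_const ‖z‖).const_add 1).log hpos.ne').const_mul (-2)
      |>.congr_deriv ?_
    simp only [id, one_mul]
    ring
  have key := sub_le_sub_of_hasDerivAt_le zero_le_one hbound
    (fun t ht => hasDerivAt_log_norm_along_segment hd hne hz ht) fun t ht => by
      have hpos : 0 < 1 + t * ‖z‖ := by nlinarith [ht.1, norm_nonneg z]
      have := hre _ (ofReal_mul_mem_ball (Ioo_subset_Icc_self ht) hz)
      rw [re_one_add_ofReal_mul_mul, norm_ofReal_mul_of_nonneg ht.1.le] at this
      rw [div_le_iff₀ hpos] at this ⊢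
      nlinarith [ht.1]
  have hz0 : 0 < ‖h z‖ := norm_pos_iff.2 (hne z hz)
  have h00 : 0 < ‖h 0‖ := norm_pos_iff.2 (hne 0 (mem_ball_self one_pos))
  rw [← Real.log_le_log_iff (by positivity) hz0, Real.log_div h00.ne' (by positivity),
    Real.log_pow]
  simp only [one_mul, zero_mul, add_zero, Real.log_one, mul_zero, sub_zero, ofReal_one,
    ofReal_zero] at key
  push_cast
  linarith

theorem mul_logDeriv_mul_id {𝕜 : Type*} [NontriviallyNormedField 𝕜] {h : 𝕜 → 𝕜} {w : 𝕜}
    (hw : w ≠ 0) (hh : h w ≠ 0) (hd : DifferentiableAt 𝕜 h w) :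
    w * logDeriv (fun v => v * h v) w = 1 + w * logDeriv h w := by
  rw [logDeriv_mul (f := fun v => v) w hw hh differentiableAt_fun_id hd, logDeriv_id', mul_add,
    mul_one_div_cancel hw]

theorem stmt14_general (f : ℂ → ℂ)
    (hf : DifferentiableOn ℂ f (ball (0:ℂ) 1))
    (h1 : deriv f 0 = 1)
    (g : ℂ → ℂ) (hg : ∀ z, g z = z * deriv f z)
    (hgnz : ∀ z ∈ ball (0:ℂ) 1, z ≠ 0 → g z ≠ 0)
    (hgre : ∀ z ∈ ball (0:ℂ) 1, z ≠ 0 → 0 < (z * deriv g z / g z).re) :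
    ∀ z ∈ ball (0:ℂ) 1,
      1 / (1 + ‖z‖) ^ 2 ≤ ‖deriv f z‖ ∧ ‖deriv f z‖ ≤ 1 / (1 - ‖z‖) ^ 2 := by
  have hf' : AnalyticOnNhd ℂ (deriv f) (ball 0 1) := (hf.analyticOnNhd isOpen_ball).deriv
  have hne : ∀ w ∈ ball (0 : ℂ) 1, deriv f w ≠ 0 := by
    intro w hw
    rcases eq_or_ne w 0 with rfl | hw0
    · exact h1 ▸ one_ne_zero
    · exact right_ne_zero_of_mul (hg w ▸ hgnz w hw hw0)
  have hp : ∀ w ∈ ball (0 : ℂ) 1, 0 < (1 + w * logDeriv (deriv f) w).re := by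
    intro w hw
    rcases eq_or_ne w 0 with rfl | hw0
    · simp
    · rw [← mul_logDeriv_mul_id hw0 (hne w hw) (hf' w hw).differentiableAt, ← funext hg,
        logDeriv_apply, ← mul_div_assoc]
      exact hgre w hw hw0
  have hcar := fun w (hw : w ∈ ball (0 : ℂ) 1) => re_mem_Icc_of_re_pos
    ((differentiableOn_const 1).add
      (differentiableOn_id.mul (hf'.deriv.differentiableOn.div hf'.differentiableOn hne)))
    (by simp) hp hw
  intro z hz
  have hupper := norm_le_div_one_sub_sq_of_re_le hf'.differentiableOn hne
    (fun w hw => (hcar w hw).2) hz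
  have hlower := div_one_add_sq_le_norm_of_le_re hf'.differentiableOn hne
    (fun w hw => (hcar w hw).1) hz
  rw [h1, norm_one] at hupper hlower
  exact ⟨hlower, hupper⟩

theorem stmt14 (f : ℂ → ℂ)
    (hf : DifferentiableOn ℂ f (ball (0:ℂ) 1))
    (h0 : f 0 = 0) (h1 : deriv f 0 = 1)
    (g : ℂ → ℂ) (hg : ∀ z, g z = z * deriv f z)
    (hgnz : ∀ z ∈ ball (0:ℂ) 1, z ≠ 0 → g z ≠ 0)
    (hgre : ∀ z ∈ ball (0:ℂ) 1, z ≠ 0 → 0 < (z * deriv g z / g z).re) :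
    ∀ z ∈ ball (0:ℂ) 1,
      1 / (1 + ‖z‖) ^ 2 ≤ ‖deriv f z‖ ∧ ‖deriv f z‖ ≤ 1 / (1 - ‖z‖) ^ 2 :=
  stmt14_general f hf h1 g hg hgnz hgre
end

section
/- Let f be a starlike function on the unit disk and let M(r) = sup_{|z|=r} |f(z)|. Then the function φ(r) = (1−r)² M(r)/r is monotonically decreasing on (0,1), and hence tends to a limit α ∈ [0,1] as r → 1⁻. -/
/-!
Write `f z = z h(z)` and `p = f' / h`, the holomorphic extension of `z f' / f`. Then `Re p > 0` and
`p 0 = 1`, so the Schwarz lemma applied to `(p - 1) / (p + 1)` gives the Harnack bound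
`Re p(z) ≤ (1 + |z|) / (1 - |z|)`. Along a ray `t ↦ t u`, the derivative of `log |f(t u)|` is
`Re p(t u) / t ≤ (1 + t) / (t (1 - t))`, which is exactly the derivative of `log (t / (1 - t)²)`;
hence `(1 - t)² |f(t u)| / t` decreases, and so does its supremum over `|u| = 1`. The limit is the
infimum, which is nonnegative and at most `lim_{r → 0} (1 - r)² M(r) / r = |f'(0)| = 1`.
-/

open Complex Metric Set

namespace Complex

theorem norm_sub_one_lt_norm_add_one_s17 {w : ℂ} (hw : 0 < w.re) : ‖w - 1‖ < ‖w + 1‖ := by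
  refine lt_of_pow_lt_pow_left₀ 2 (norm_nonneg _) ?_
  simp only [Complex.sq_norm, normSq_apply, sub_re, sub_im, add_re, add_im, one_re, one_im]
  nlinarith

theorem re_mul_one_sub_le_of_norm_sub_one_le {w : ℂ} {r : ℝ} (hr : r < 1)
    (h : ‖w - 1‖ ≤ r * ‖w + 1‖) : w.re * (1 - r) ≤ 1 + r := by
  have hr0 : 0 ≤ r := by
    by_contra! hneg
    have : ‖w + 1‖ = 0 := by nlinarith [norm_nonneg (w - 1), norm_nonneg (w + 1)]
    have hw : w = -1 := eq_neg_of_add_eq_zero_left (norm_eq_zero.1 this)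
    norm_num [hw] at h
  have hsq : ‖w - 1‖ ^ 2 ≤ r ^ 2 * ‖w + 1‖ ^ 2 := by
    rw [← mul_pow]; exact pow_le_pow_left₀ (norm_nonneg _) h 2
  simp only [Complex.sq_norm, normSq_apply, sub_re, sub_im, add_re, add_im, one_re, one_im] at hsq
  by_contra! hlt
  have hx : 0 < w.re := by nlinarith
  have hlt' : 0 < w.re * (1 + r) - (1 - r) := by nlinarith
  nlinarith [mul_pos (sub_pos.2 hlt) hlt',
    mul_nonneg (by nlinarith : 0 ≤ 1 - r ^ 2) (sq_nonneg w.im)]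

theorem re_mul_one_sub_norm_le_of_re_pos {p : ℂ → ℂ} (hp : DifferentiableOn ℂ p (ball 0 1))
    (hp0 : p 0 = 1) (hpos : ∀ z ∈ ball (0 : ℂ) 1, 0 < (p z).re) {z : ℂ} (hz : z ∈ ball (0 : ℂ) 1) :
    (p z).re * (1 - ‖z‖) ≤ 1 + ‖z‖ := by
  have hden : ∀ ζ ∈ ball (0 : ℂ) 1, p ζ + 1 ≠ 0 := fun ζ hζ h ↦ by
    simpa [h] using (norm_sub_one_lt_norm_add_one_s17 (hpos ζ hζ)).trans_le' (norm_nonneg _)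
  set w : ℂ → ℂ := fun ζ ↦ (p ζ - 1) / (p ζ + 1)
  have hw : DifferentiableOn ℂ w (ball 0 1) :=
    (hp.sub_const 1).div (hp.add_const 1) hden
  have hmaps : MapsTo w (ball 0 1) (closedBall 0 1) := fun ζ hζ ↦ by
    simpa [w, norm_div, div_le_one₀ (norm_pos_iff.2 (hden ζ hζ))]
      using (norm_sub_one_lt_norm_add_one_s17 (hpos ζ hζ)).le
  have hschwarz : ‖w z‖ ≤ ‖z‖ :=
    norm_le_norm_of_mapsTo_ball hw hmaps (by simp [w, hp0]) (mem_ball_zero_iff.1 hz)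
  rw [norm_div, div_le_iff₀ (norm_pos_iff.2 (hden z hz))] at hschwarz
  exact re_mul_one_sub_le_of_norm_sub_one_le (mem_ball_zero_iff.1 hz) hschwarz

end Complex

theorem HasDerivAt.log_norm_s17 {F : ℝ → ℂ} {F' : ℂ} {t : ℝ} (hF : HasDerivAt F F' t) (ht : F t ≠ 0) :
    HasDerivAt (fun s ↦ Real.log ‖F s‖) (F' / F t).re t := by
  have hlog : HasDerivAt (fun s ↦ Complex.log (F s / F t)) (F' / F t) t := by
    simpa [ht] using (hF.div_const (F t)).clog_real (by simp [ht])
  have hre : HasDerivAt (fun s ↦ (Complex.log (F s / F t)).re + Real.log ‖F t‖) (F' / F t).re t :=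
    (reCLM.hasFDerivAt.comp_hasDerivAt t hlog).add_const _
  refine hre.congr_of_eventuallyEq ?_
  filter_upwards [hF.continuousAt.eventually_ne ht] with s hs
  rw [log_re, norm_div, Real.log_div (norm_ne_zero_iff.2 hs) (norm_ne_zero_iff.2 ht),
    sub_add_cancel]

theorem eq_mul_dslope_of_map_zero {f : ℂ → ℂ} (h0 : f 0 = 0) (z : ℂ) : f z = z * dslope f 0 z := by
  simpa [h0] using (sub_smul_dslope f 0 z).symm

theorem norm_ofReal_mul_of_norm_eq_one {u : ℂ} (hu : ‖u‖ = 1) {t : ℝ} (ht : 0 ≤ t) :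
    ‖(t : ℂ) * u‖ = t := by
  rw [norm_mul, hu, mul_one, norm_real, Real.norm_of_nonneg ht]

theorem ofReal_mul_mem_ball_diff_zero {u : ℂ} (hu : ‖u‖ = 1) {t : ℝ} (ht : t ∈ Ioo (0 : ℝ) 1) :
    (t : ℂ) * u ∈ ball (0 : ℂ) 1 \ {0} := by
  have hnorm := norm_ofReal_mul_of_norm_eq_one hu ht.1.le
  exact ⟨by rw [mem_ball_zero_iff, hnorm]; exact ht.2, norm_pos_iff.1 (by rw [hnorm]; exact ht.1)⟩

noncomputable def maxModulus {E : Type*} [NormedAddCommGroup E] (f : ℂ → E) (r : ℝ) : ℝ :=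
  sSup ((fun z ↦ ‖f z‖) '' sphere 0 r)

section maxModulus

variable {E : Type*} [NormedAddCommGroup E] {f : ℂ → E} {r : ℝ}

theorem maxModulus_nonneg : 0 ≤ maxModulus f r :=
  Real.sSup_nonneg (by rintro _ ⟨z, -, rfl⟩; exact norm_nonneg _)

theorem norm_le_maxModulus (hf : ContinuousOn f (sphere 0 r)) {z : ℂ} (hz : z ∈ sphere (0 : ℂ) r) :
    ‖f z‖ ≤ maxModulus f r :=
  le_csSup ((isCompact_sphere 0 r).bddAbove_image hf.norm) ⟨z, hz, rfl⟩

theorem maxModulus_le {c : ℝ} (hc : 0 ≤ c) (h : ∀ z ∈ sphere (0 : ℂ) r, ‖f z‖ ≤ c) :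
    maxModulus f r ≤ c :=
  Real.sSup_le (by rintro _ ⟨z, hz, rfl⟩; exact h z hz) hc

theorem eventually_maxModulus_le [NormedSpace ℂ E] {f' : E} (hf : HasDerivAt f f' 0) (h0 : f 0 = 0)
    {ε : ℝ} (hε : 0 < ε) : ∀ᶠ r in nhdsWithin 0 (Ioi 0), maxModulus f r ≤ (‖f'‖ + ε) * r := by
  obtain ⟨δ, hδ, hball⟩ := Metric.eventually_nhds_iff.1 ((hasDerivAt_iff_isLittleO.1 hf).def hε)
  filter_upwards [Ioo_mem_nhdsGT hδ] with r hr
  refine maxModulus_le (by positivity [hr.1.le]) fun z hz ↦ ?_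
  rw [mem_sphere_zero_iff_norm] at hz
  have hz' := hball (show dist z 0 < δ by rw [dist_zero_right, hz]; exact hr.2)
  simp only [h0, sub_zero, hz] at hz'
  calc ‖f z‖ ≤ ‖z • f'‖ + ε * r := (norm_le_insert' _ _).trans (by linarith)
    _ = (‖f'‖ + ε) * r := by rw [norm_smul, hz]; ring

theorem sq_one_sub_mul_maxModulus_div_nonneg (hr : 0 ≤ r) : 0 ≤ (1 - r) ^ 2 * maxModulus f r / r :=
  div_nonneg (mul_nonneg (sq_nonneg _) maxModulus_nonneg) hr

end maxModulus

structure IsStarlike (f : ℂ → ℂ) : Prop where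
  differentiableOn : DifferentiableOn ℂ f (ball 0 1)
  map_zero : f 0 = 0
  deriv_zero : deriv f 0 = 1
  ne_zero : ∀ z ∈ ball (0 : ℂ) 1, z ≠ 0 → f z ≠ 0
  re_pos : ∀ z ∈ ball (0 : ℂ) 1, z ≠ 0 → 0 < (z * deriv f z / f z).re

namespace IsStarlike

variable {f : ℂ → ℂ}

theorem dslope_ne_zero (hf : IsStarlike f) {z : ℂ} (hz : z ∈ ball (0 : ℂ) 1) :
    dslope f 0 z ≠ 0 := by
  rcases eq_or_ne z 0 with rfl | hz0
  · simp [hf.deriv_zero]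
  · intro h
    exact hf.ne_zero z hz hz0 (by rw [eq_mul_dslope_of_map_zero hf.map_zero z, h, mul_zero])

theorem re_mul_deriv_div_mul_one_sub_norm_le (hf : IsStarlike f) {z : ℂ} (hz : z ∈ ball (0 : ℂ) 1)
    (hz0 : z ≠ 0) :
    (z * deriv f z / f z).re * (1 - ‖z‖) ≤ 1 + ‖z‖ := by
  have hp : DifferentiableOn ℂ (fun ζ ↦ deriv f ζ / dslope f 0 ζ) (ball 0 1) :=
    (hf.differentiableOn.analyticOnNhd isOpen_ball).deriv.differentiableOn.div
      ((differentiableOn_dslope (ball_mem_nhds _ one_pos)).2 hf.differentiableOn)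
      fun ζ hζ ↦ hf.dslope_ne_zero hζ
  have hp_eq : ∀ ζ, ζ ≠ 0 → deriv f ζ / dslope f 0 ζ = ζ * deriv f ζ / f ζ := fun ζ hζ ↦ by
    rw [eq_mul_dslope_of_map_zero hf.map_zero ζ, mul_div_mul_left _ _ hζ]
  have hpos : ∀ ζ ∈ ball (0 : ℂ) 1, 0 < (deriv f ζ / dslope f 0 ζ).re := fun ζ hζ ↦ by
    rcases eq_or_ne ζ 0 with rfl | hζ0
    · simp [hf.deriv_zero]
    · rw [hp_eq ζ hζ0]; exact hf.re_pos ζ hζ hζ0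
  simpa [hp_eq z hz0] using
    re_mul_one_sub_norm_le_of_re_pos hp (by simp [hf.deriv_zero]) hpos hz

theorem hasDerivAt_log_norm_comp_mul (hf : IsStarlike f) {u : ℂ} (hu : ‖u‖ = 1) {t : ℝ}
    (ht : t ∈ Ioo (0 : ℝ) 1) :
    HasDerivAt (fun s : ℝ ↦ Real.log ‖f (s * u)‖)
      ((t * u * deriv f (t * u) / f (t * u)).re / t) t := by
  obtain ⟨hmem, hne⟩ := ofReal_mul_mem_ball_diff_zero hu ht
  have hF : HasDerivAt (fun s : ℝ ↦ f (s * u)) (deriv f (t * u) * u) t :=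
    ((hf.differentiableOn.differentiableAt (isOpen_ball.mem_nhds hmem)).hasDerivAt.comp (t : ℂ)
      (hasDerivAt_mul_const u)).comp_ofReal
  convert hF.log_norm_s17 (hf.ne_zero _ hmem hne) using 1
  rw [← div_ofReal_re]
  congr 1
  field_simp [ht.1.ne']

theorem antitoneOn_comp_mul (hf : IsStarlike f) {u : ℂ} (hu : ‖u‖ = 1) :
    AntitoneOn (fun t : ℝ ↦ (1 - t) ^ 2 * ‖f (t * u)‖ / t) (Ioo 0 1) := by
  set q : ℝ → ℝ := fun t ↦ (t * u * deriv f (t * u) / f (t * u)).re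
  have hderiv : ∀ t ∈ Ioo (0 : ℝ) 1, HasDerivAt
      (fun s ↦ Real.log ((1 - s) ^ 2) + Real.log ‖f (s * u)‖ - Real.log s)
      (-2 / (1 - t) + q t / t - t⁻¹) t := fun t ht ↦ by
    have h1t : HasDerivAt (fun s ↦ Real.log ((1 - s) ^ 2)) (-2 / (1 - t)) t := by
      convert (((hasDerivAt_id' t).const_sub 1).fun_pow 2).log
        (pow_ne_zero 2 (sub_pos.2 ht.2).ne') using 1
      field_simp [(sub_pos.2 ht.2).ne']
      ring
    exact (h1t.add (hf.hasDerivAt_log_norm_comp_mul hu ht)).sub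
      (Real.hasDerivAt_log ht.1.ne')
  have hnonpos : ∀ t ∈ Ioo (0 : ℝ) 1, -2 / (1 - t) + q t / t - t⁻¹ ≤ 0 := fun t ht ↦ by
    obtain ⟨hmem, hne⟩ := ofReal_mul_mem_ball_diff_zero hu ht
    have hq := hf.re_mul_deriv_div_mul_one_sub_norm_le hmem hne
    rw [norm_ofReal_mul_of_norm_eq_one hu ht.1.le] at hq
    have h1t : 0 < 1 - t := sub_pos.2 ht.2
    have heq : -2 / (1 - t) + q t / t - t⁻¹ = (q t * (1 - t) - (1 + t)) / (t * (1 - t)) := by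
      field_simp [ht.1.ne', h1t.ne']
      ring
    rw [heq]
    exact div_nonpos_of_nonpos_of_nonneg (by linarith) (mul_nonneg ht.1.le h1t.le)
  have hanti : AntitoneOn (fun s ↦ Real.log ((1 - s) ^ 2) + Real.log ‖f (s * u)‖ - Real.log s)
      (Ioo 0 1) :=
    antitoneOn_of_hasDerivWithinAt_nonpos (convex_Ioo 0 1)
      (fun t ht ↦ (hderiv t ht).continuousAt.continuousWithinAt)
      (by simpa only [interior_Ioo] using fun t ht ↦ (hderiv t ht).hasDerivWithinAt)
      (by simpa only [interior_Ioo] using hnonpos)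
  refine (Real.exp_monotone.comp_antitoneOn hanti).congr fun t ht ↦ ?_
  obtain ⟨hmem, hne⟩ := ofReal_mul_mem_ball_diff_zero hu ht
  have hfne := norm_pos_iff.2 (hf.ne_zero _ hmem hne)
  have h1t : 0 < 1 - t := sub_pos.2 ht.2
  rw [Function.comp_apply, Real.exp_sub, Real.exp_add, Real.exp_log (pow_pos h1t 2),
    Real.exp_log hfne, Real.exp_log ht.1]

theorem antitoneOn_maxModulus (hf : IsStarlike f) :
    AntitoneOn (fun r : ℝ ↦ (1 - r) ^ 2 * maxModulus f r / r) (Ioo 0 1) := by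
  intro r₁ h₁ r₂ h₂ h12
  have hc₂ : 0 < (1 - r₂) ^ 2 / r₂ := div_pos (pow_pos (sub_pos.2 h₂.2) 2) h₂.1
  have hM₁ : 0 ≤ (1 - r₁) ^ 2 / r₁ * maxModulus f r₁ :=
    mul_nonneg (div_nonneg (sq_nonneg _) h₁.1.le) maxModulus_nonneg
  simp only [mul_div_right_comm _ (maxModulus f _)]
  rw [mul_comm, ← le_div_iff₀ hc₂]
  refine maxModulus_le (div_nonneg hM₁ hc₂.le) fun z hz ↦ ?_
  rw [le_div_iff₀ hc₂, mul_comm]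
  rw [mem_sphere_zero_iff_norm] at hz
  set u := z / r₂
  have hu : ‖u‖ = 1 := by
    rw [norm_div, hz, norm_real, Real.norm_of_nonneg h₂.1.le, div_self h₂.1.ne']
  have hzu : z = r₂ * u := by rw [mul_div_cancel₀ _ (ofReal_ne_zero.2 h₂.1.ne')]
  have hsphere : (r₁ : ℂ) * u ∈ sphere (0 : ℂ) r₁ := by
    rw [mem_sphere_zero_iff_norm, norm_ofReal_mul_of_norm_eq_one hu h₁.1.le]
  calc (1 - r₂) ^ 2 / r₂ * ‖f z‖ = (1 - r₂) ^ 2 * ‖f (r₂ * u)‖ / r₂ := by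
        rw [← hzu, mul_div_right_comm]
    _ ≤ (1 - r₁) ^ 2 * ‖f (r₁ * u)‖ / r₁ := hf.antitoneOn_comp_mul hu h₁ h₂ h12
    _ ≤ (1 - r₁) ^ 2 / r₁ * maxModulus f r₁ := by
        rw [mul_div_right_comm]
        exact mul_le_mul_of_nonneg_left (norm_le_maxModulus
          (hf.differentiableOn.continuousOn.mono (sphere_subset_ball h₁.2)) hsphere)
          (div_nonneg (sq_nonneg _) h₁.1.le)

theorem sInf_le_one (hf : IsStarlike f) :
    sInf ((fun r : ℝ ↦ (1 - r) ^ 2 * maxModulus f r / r) '' Ioo 0 1) ≤ 1 := by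
  have hderiv : HasDerivAt f 1 0 := hf.deriv_zero ▸
    (hf.differentiableOn.differentiableAt (ball_mem_nhds 0 one_pos)).hasDerivAt
  refine le_of_forall_pos_le_add fun ε hε ↦ ?_
  obtain ⟨r, hMr, hr⟩ :=
    ((eventually_maxModulus_le hderiv hf.map_zero hε).and (Ioo_mem_nhdsGT one_pos)).exists
  have hbdd : BddBelow ((fun r : ℝ ↦ (1 - r) ^ 2 * maxModulus f r / r) '' Ioo 0 1) :=
    ⟨0, by rintro _ ⟨s, hs, rfl⟩; exact sq_one_sub_mul_maxModulus_div_nonneg hs.1.le⟩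
  calc sInf _ ≤ (1 - r) ^ 2 * maxModulus f r / r := csInf_le hbdd ⟨r, hr, rfl⟩
    _ ≤ (1 - r) ^ 2 * ((1 + ε) * r) / r := by
        gcongr
        · exact hr.1.le
        · simpa using hMr
    _ = (1 - r) ^ 2 * (1 + ε) := by field_simp [hr.1.ne']
    _ ≤ 1 + ε := mul_le_of_le_one_left (by positivity) (by nlinarith [hr.1, hr.2])

end IsStarlike

theorem stmt17 (f : ℂ → ℂ)
    (hf : DifferentiableOn ℂ f (ball (0:ℂ) 1))
    (h0 : f 0 = 0) (h1 : deriv f 0 = 1)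
    (hnz : ∀ z ∈ ball (0:ℂ) 1, z ≠ 0 → f z ≠ 0)
    (hre : ∀ z ∈ ball (0:ℂ) 1, z ≠ 0 → 0 < (z * deriv f z / f z).re)
    (M : ℝ → ℝ) (hM : ∀ r, M r = sSup ((fun z => ‖f z‖) '' sphere (0:ℂ) r))
    (φ : ℝ → ℝ) (hφ : ∀ r, φ r = (1 - r) ^ 2 * M r / r) :
    AntitoneOn φ (Set.Ioo (0:ℝ) 1) ∧
    ∃ α ∈ Set.Icc (0:ℝ) 1,
      Filter.Tendsto φ (nhdsWithin 1 (Set.Iio 1)) (nhds α) := by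
  obtain rfl : M = maxModulus f := funext hM
  obtain rfl : φ = fun r ↦ (1 - r) ^ 2 * maxModulus f r / r := funext hφ
  have hs : IsStarlike f := ⟨hf, h0, h1, hnz, hre⟩
  have hanti := hs.antitoneOn_maxModulus
  have hnonneg : ∀ y ∈ (fun r ↦ (1 - r) ^ 2 * maxModulus f r / r) '' Ioo 0 1, 0 ≤ y := by
    rintro _ ⟨r, hr, rfl⟩
    exact sq_one_sub_mul_maxModulus_div_nonneg hr.1.le
  have hne : (Ioo (0 : ℝ) 1).Nonempty := nonempty_Ioo.2 one_pos
  exact ⟨hanti, _, ⟨le_csInf (hne.image _) hnonneg, hs.sInf_le_one⟩,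
    hanti.tendsto_nhdsWithin_Ioo_left hne ⟨0, hnonneg⟩⟩
end
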